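/- arXiv:2303.11038 — 3 statements merged into one kernel-verified Lean document; each statement's English description precedes it below -/
import Mathlib

section
/- Let μ be a finite Borel measure on S^{n-1} not concentrated on any closed hemisphere, K a convex body containing the origin, x ∈ ℝ^n, and p > 1. If ∫_{S^{n-1}} ((h(K,v) + (h(K,v)+x·v))/2)^p dμ(v) = ∫_{S^{n-1}} (h(K,v)^p + (h(K,v)+x·v)^p)/2 dμ(v) and h(K,v)+x·v ≥ 0 for all v in the support of μ, then x = 0. -/
open MeasureTheory Metric
open scoped RealInnerProductSpace

noncomputable def suppFn {n : ℕ} (K : Set (EuclideanSpace ℝ (Fin n)))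
    (v : EuclideanSpace ℝ (Fin n)) : ℝ :=
  sSup ((fun x => ⟪x, v⟫) '' K)

lemma null_compl {α : Type*} [TopologicalSpace α] [SecondCountableTopology α]
    [MeasurableSpace α] (μ : Measure α) : μ {v | ∀ U ∈ nhds v, 0 < μ U}ᶜ = 0 := by
  obtain ⟨B, hBc, -, hB⟩ := TopologicalSpace.exists_countable_basis α
  have hsub : {v | ∀ U ∈ nhds v, 0 < μ U}ᶜ ⊆ ⋃ t ∈ {t ∈ B | μ t = 0}, t := by
    intro v hv
    simp only [Set.mem_compl_iff, Set.mem_setOf_eq, not_forall] at hv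
    obtain ⟨U, hU, hU0⟩ := hv
    have h0 : μ U = 0 := le_zero_iff.mp (not_lt.mp hU0)
    obtain ⟨t, htB, hvt, htU⟩ := hB.mem_nhds_iff.mp hU
    exact Set.mem_biUnion ⟨htB, measure_mono_null htU h0⟩ hvt
  exact measure_mono_null hsub
    ((measure_biUnion_null_iff (hBc.mono (Set.sep_subset _ _))).mpr fun t ht => ht.2)

lemma midpt_lt {p : ℝ} (hp : 1 < p) {a b : ℝ} (ha : 0 ≤ a) (hb : 0 ≤ b) (hab : a ≠ b) :
    ((a + b) / 2) ^ p < (a ^ p + b ^ p) / 2 := by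
  have := (strictConvexOn_rpow hp).2 (Set.mem_Ici.mpr ha) (Set.mem_Ici.mpr hb) hab
    (by norm_num : (0:ℝ) < 1/2) (by norm_num : (0:ℝ) < 1/2) (by norm_num)
  simp only [smul_eq_mul] at this
  calc ((a + b) / 2) ^ p = (1/2 * a + 1/2 * b) ^ p := by ring_nf
    _ < 1/2 * a ^ p + 1/2 * b ^ p := this
    _ = (a ^ p + b ^ p) / 2 := by ring

lemma midpt_le {p : ℝ} (hp : 1 < p) {a b : ℝ} (ha : 0 ≤ a) (hb : 0 ≤ b) :
    ((a + b) / 2) ^ p ≤ (a ^ p + b ^ p) / 2 := by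
  rcases eq_or_ne a b with rfl | h
  · rw [show (a+a)/2 = a by ring, show (a^p+a^p)/2 = a^p by ring]
  · exact (midpt_lt hp ha hb h).le

lemma suppFn_bddAbove {n : ℕ} {K : Set (EuclideanSpace ℝ (Fin n))} (hK : IsCompact K)
    (v : EuclideanSpace ℝ (Fin n)) : BddAbove ((fun x => ⟪x, v⟫) '' K) :=
  (hK.image (continuous_id.inner continuous_const)).bddAbove

lemma suppFn_nonneg {n : ℕ} {K : Set (EuclideanSpace ℝ (Fin n))} (hK : IsCompact K)
    (hK0 : (0 : EuclideanSpace ℝ (Fin n)) ∈ K) (v : EuclideanSpace ℝ (Fin n)) :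
    0 ≤ suppFn K v := by
  have : ⟪(0 : EuclideanSpace ℝ (Fin n)), v⟫ ≤ suppFn K v :=
    le_csSup (suppFn_bddAbove hK v) ⟨0, hK0, rfl⟩
  simpa using this

lemma suppFn_continuous {n : ℕ} {K : Set (EuclideanSpace ℝ (Fin n))} (hK : IsCompact K)
    (hK0 : (0 : EuclideanSpace ℝ (Fin n)) ∈ K) : Continuous (suppFn K) := by
  obtain ⟨R, hR⟩ := hK.isBounded.subset_closedBall 0
  have hR0 : 0 ≤ R := by
    have := hR hK0; simpa using this
  have key : ∀ v w : EuclideanSpace ℝ (Fin n), suppFn K v ≤ suppFn K w + R * ‖v - w‖ := by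
    intro v w
    apply Real.sSup_le
    · rintro _ ⟨y, hy, rfl⟩
      have h1 : ⟪y, v⟫ = ⟪y, w⟫ + ⟪y, v - w⟫ := by
        rw [inner_sub_right]; ring
      have h2 : ⟪y, w⟫ ≤ suppFn K w := le_csSup (suppFn_bddAbove hK w) ⟨y, hy, rfl⟩
      have h3 : ⟪y, v - w⟫ ≤ ‖y‖ * ‖v - w‖ := real_inner_le_norm _ _
      have h4 : ‖y‖ ≤ R := by simpa using hR hy
      nlinarith [norm_nonneg (v - w)]
    · have h5 : 0 ≤ R * ‖v - w‖ := by positivity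
      linarith [suppFn_nonneg hK hK0 w]
  have lip : LipschitzWith ⟨R, hR0⟩ (suppFn K) := by
    apply LipschitzWith.of_dist_le_mul
    intro v w
    rw [Real.dist_eq, dist_eq_norm, abs_sub_le_iff]
    constructor
    · have := key v w; show _ ≤ R * _; linarith
    · have := key w v; rw [← norm_neg, neg_sub] at this; show _ ≤ R * _; linarith
  exact lip.continuous

theorem stmt13 {n : ℕ} (p : ℝ) (hp : 1 < p)
    (μ : Measure ↥(sphere (0 : EuclideanSpace ℝ (Fin n)) 1)) [IsFiniteMeasure μ]
    (hμ : ∀ u : ↥(sphere (0 : EuclideanSpace ℝ (Fin n)) 1),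
      0 < μ {v | 0 < ⟪(u : EuclideanSpace ℝ (Fin n)), (v : EuclideanSpace ℝ (Fin n))⟫})
    (K : Set (EuclideanSpace ℝ (Fin n)))
    (hKconv : Convex ℝ K) (hKcpt : IsCompact K) (hKint : (interior K).Nonempty)
    (hK0 : (0 : EuclideanSpace ℝ (Fin n)) ∈ K)
    (x : EuclideanSpace ℝ (Fin n))
    (hnonneg : ∀ v : ↥(sphere (0 : EuclideanSpace ℝ (Fin n)) 1),
      (∀ U ∈ nhds v, 0 < μ U) →
      0 ≤ suppFn K (v : EuclideanSpace ℝ (Fin n)) +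
        ⟪x, (v : EuclideanSpace ℝ (Fin n))⟫)
    (heq : ∫ v, ((suppFn K (v : EuclideanSpace ℝ (Fin n)) +
          (suppFn K (v : EuclideanSpace ℝ (Fin n)) +
            ⟪x, (v : EuclideanSpace ℝ (Fin n))⟫)) / 2) ^ p ∂μ =
        ∫ v, (suppFn K (v : EuclideanSpace ℝ (Fin n)) ^ p +
          (suppFn K (v : EuclideanSpace ℝ (Fin n)) +
            ⟪x, (v : EuclideanSpace ℝ (Fin n))⟫) ^ p) / 2 ∂μ) :
    x = 0 := by
  by_contra hx
  have hp0 : (0:ℝ) ≤ p := (zero_lt_one.trans hp).le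
  set f : ↥(sphere (0 : EuclideanSpace ℝ (Fin n)) 1) → ℝ := fun v => suppFn K (v : EuclideanSpace ℝ (Fin n)) with hf
  set g : ↥(sphere (0 : EuclideanSpace ℝ (Fin n)) 1) → ℝ := fun v => f v + ⟪x, (v : EuclideanSpace ℝ (Fin n))⟫ with hg
  have hfc : Continuous f := (suppFn_continuous hKcpt hK0).comp continuous_subtype_val
  have hgc : Continuous g :=
    hfc.add ((continuous_const.inner continuous_id).comp continuous_subtype_val)
  have hFc : Continuous (fun v => ((f v + g v) / 2) ^ p) :=
    ((hfc.add hgc).div_const 2).rpow_const fun _ => Or.inr hp0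
  have hGc : Continuous (fun v => (f v ^ p + g v ^ p) / 2) :=
    (((hfc.rpow_const fun _ => Or.inr hp0).add
      (hgc.rpow_const fun _ => Or.inr hp0)).div_const 2)
  haveI : CompactSpace ↥(sphere (0 : EuclideanSpace ℝ (Fin n)) 1) :=
    isCompact_iff_compactSpace.mp (isCompact_sphere 0 1)
  have hFi : Integrable (fun v => ((f v + g v) / 2) ^ p) μ :=
    hFc.integrable_of_hasCompactSupport
      (IsCompact.of_isClosed_subset isCompact_univ (isClosed_tsupport _) (Set.subset_univ _))
  have hGi : Integrable (fun v => (f v ^ p + g v ^ p) / 2) μ :=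
    hGc.integrable_of_hasCompactSupport
      (IsCompact.of_isClosed_subset isCompact_univ (isClosed_tsupport _) (Set.subset_univ _))
  have hS : ∀ᵐ v ∂μ, ∀ U ∈ nhds v, 0 < μ U := by
    rw [ae_iff]
    simpa [Set.compl_def] using null_compl μ
  have hφ0 : 0 ≤ᵐ[μ] fun v => (f v ^ p + g v ^ p) / 2 - ((f v + g v) / 2) ^ p := by
    filter_upwards [hS] with v hv
    exact sub_nonneg.mpr (midpt_le hp (suppFn_nonneg hKcpt hK0 _) (hnonneg v hv))
  have hint0 : ∫ v, ((f v ^ p + g v ^ p) / 2 - ((f v + g v) / 2) ^ p) ∂μ = 0 := by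
    rw [integral_sub hGi hFi, ← heq]
    exact sub_self _
  have hae0 : (fun v => (f v ^ p + g v ^ p) / 2 - ((f v + g v) / 2) ^ p) =ᵐ[μ] 0 :=
    (integral_eq_zero_iff_of_nonneg_ae hφ0 (hGi.sub hFi)).mp hint0
  have hinner : ∀ᵐ v : ↥(sphere (0 : EuclideanSpace ℝ (Fin n)) 1) ∂μ, ⟪x, (v : EuclideanSpace ℝ (Fin n))⟫ = 0 := by
    filter_upwards [hS, hae0] with v hv h0
    have hgnn : 0 ≤ g v := hnonneg v hv
    have hfg : f v = g v := by
      by_contra hne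
      have := midpt_lt hp (suppFn_nonneg hKcpt hK0 (v : EuclideanSpace ℝ (Fin n))) hgnn hne
      have h0' : (f v ^ p + g v ^ p) / 2 - ((f v + g v) / 2) ^ p = 0 := h0
      linarith
    have : f v + ⟪x, (v : EuclideanSpace ℝ (Fin n))⟫ = f v + 0 := by
      rw [add_zero]; exact hfg.symm
    exact add_left_cancel this
  have hnull : μ {v : ↥(sphere (0 : EuclideanSpace ℝ (Fin n)) 1) | ⟪x, (v : EuclideanSpace ℝ (Fin n))⟫ ≠ 0} = 0 := by
    rw [ae_iff] at hinner; exact hinner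
  have hxn : (0:ℝ) < ‖x‖ := norm_pos_iff.mpr hx
  have humem : ‖x‖⁻¹ • x ∈ sphere (0 : EuclideanSpace ℝ (Fin n)) 1 := by
    rw [mem_sphere_zero_iff_norm, norm_smul, norm_inv, norm_norm]
    exact inv_mul_cancel₀ hxn.ne'
  have hsub : {v : ↥(sphere (0 : EuclideanSpace ℝ (Fin n)) 1) | 0 < ⟪((⟨_, humem⟩ : ↥(sphere (0 : EuclideanSpace ℝ (Fin n)) 1)) : EuclideanSpace ℝ (Fin n)), (v : EuclideanSpace ℝ (Fin n))⟫}
      ⊆ {v : ↥(sphere (0 : EuclideanSpace ℝ (Fin n)) 1) | ⟪x, (v : EuclideanSpace ℝ (Fin n))⟫ ≠ 0} := by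
    intro v hv
    simp only [Set.mem_setOf_eq, real_inner_smul_left] at hv ⊢
    intro h
    rw [h, mul_zero] at hv
    exact lt_irrefl 0 hv
  exact absurd (measure_mono_null hsub hnull) (hμ ⟨_, humem⟩).ne'
end

section
/- Let Ω be a convex body in ℝ^n and u the solution of Δu = -2 in Ω with u = 0 on ∂Ω. Then |∇u(x)| ≤ diam(Ω) for all x ∈ Ω, and consequently the torsional rigidity satisfies T(Ω) = ∫_Ω |∇u|² dx ≤ diam(Ω)² · Vol(Ω). -/
open MeasureTheory Metric Set Filter

noncomputable section

variable {n : ℕ}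


/-- Second directional derivative. -/
def sdd (f : EuclideanSpace ℝ (Fin n) → ℝ) (x v : EuclideanSpace ℝ (Fin n)) : ℝ :=
  fderiv ℝ (fderiv ℝ f) x v v

lemma ev_diff {f : EuclideanSpace ℝ (Fin n) → ℝ} {x : EuclideanSpace ℝ (Fin n)}
    (hf : ContDiffAt ℝ 2 f x) : ∀ᶠ y in nhds x, DifferentiableAt ℝ f y := by
  filter_upwards [hf.eventually (by norm_num)] with y hy
  exact hy.differentiableAt (by norm_num)

lemma diff_fderiv {f : EuclideanSpace ℝ (Fin n) → ℝ} {x : EuclideanSpace ℝ (Fin n)}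
    (hf : ContDiffAt ℝ 2 f x) : DifferentiableAt ℝ (fderiv ℝ f) x :=
  (hf.fderiv_right (by norm_num : (1 : WithTop ℕ∞) + 1 ≤ 2)).differentiableAt one_ne_zero

lemma sdd_add {f g : EuclideanSpace ℝ (Fin n) → ℝ} {x : EuclideanSpace ℝ (Fin n)}
    (hf : ContDiffAt ℝ 2 f x) (hg : ContDiffAt ℝ 2 g x) (v : EuclideanSpace ℝ (Fin n)) :
    sdd (fun z => f z + g z) x v = sdd f x v + sdd g x v := by
  have h1 : (fun y => fderiv ℝ (fun z => f z + g z) y) =ᶠ[nhds x]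
      (fun y => fderiv ℝ f y + fderiv ℝ g y) := by
    filter_upwards [ev_diff hf, ev_diff hg] with y h1 h2
    exact fderiv_add h1 h2
  unfold sdd
  rw [h1.fderiv_eq, fderiv_fun_add (diff_fderiv hf) (diff_fderiv hg)]
  simp

lemma sdd_sub {f g : EuclideanSpace ℝ (Fin n) → ℝ} {x : EuclideanSpace ℝ (Fin n)}
    (hf : ContDiffAt ℝ 2 f x) (hg : ContDiffAt ℝ 2 g x) (v : EuclideanSpace ℝ (Fin n)) :
    sdd (fun z => f z - g z) x v = sdd f x v - sdd g x v := by
  have h1 : (fun y => fderiv ℝ (fun z => f z - g z) y) =ᶠ[nhds x]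
      (fun y => fderiv ℝ f y - fderiv ℝ g y) := by
    filter_upwards [ev_diff hf, ev_diff hg] with y h1 h2
    exact fderiv_sub h1 h2
  unfold sdd
  rw [h1.fderiv_eq, fderiv_fun_sub (diff_fderiv hf) (diff_fderiv hg)]
  simp

lemma sdd_neg {f : EuclideanSpace ℝ (Fin n) → ℝ} {x v : EuclideanSpace ℝ (Fin n)} :
    sdd (fun z => -(f z)) x v = -(sdd f x v) := by
  have h1 : (fun y => fderiv ℝ (fun z => -(f z)) y) =ᶠ[nhds x] (fun y => -(fderiv ℝ f y)) := by
    filter_upwards with y; exact fderiv_neg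
  unfold sdd
  rw [h1.fderiv_eq, fderiv_fun_neg]
  simp

lemma sdd_const_mul {f : EuclideanSpace ℝ (Fin n) → ℝ} {x : EuclideanSpace ℝ (Fin n)}
    (hf : ContDiffAt ℝ 2 f x) (c : ℝ) (v : EuclideanSpace ℝ (Fin n)) :
    sdd (fun z => c * f z) x v = c * sdd f x v := by
  have h1 : (fun y => fderiv ℝ (fun z => c * f z) y) =ᶠ[nhds x]
      (fun y => c • fderiv ℝ f y) := by
    filter_upwards [ev_diff hf] with y h1
    exact fderiv_const_mul h1 c
  unfold sdd
  rw [h1.fderiv_eq, fderiv_fun_const_smul (diff_fderiv hf)]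
  simp


lemma sdd_affine_mul (ℓ : EuclideanSpace ℝ (Fin n) →L[ℝ] ℝ) (a b : ℝ)
    (x v : EuclideanSpace ℝ (Fin n)) :
    sdd (fun z => (ℓ z + a) * (b - ℓ z)) x v = -2 * (ℓ v * ℓ v) := by
  have h1 : fderiv ℝ (fun z => (ℓ z + a) * (b - ℓ z))
      = fun y => ((ℓ y + a) • (-ℓ) + (b - ℓ y) • ℓ) := by
    funext y
    exact ((ℓ.hasFDerivAt.add_const a).mul (ℓ.hasFDerivAt.const_sub b)).fderiv
  have h2 : HasFDerivAt (fun y => ((ℓ y + a) • (-ℓ) + (b - ℓ y) • ℓ))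
      (ℓ.smulRight (-ℓ) + (-ℓ).smulRight ℓ) x :=
    ((ℓ.hasFDerivAt.add_const a).smul_const (-ℓ)).add
      ((ℓ.hasFDerivAt.const_sub b).smul_const ℓ)
  unfold sdd
  rw [h1, h2.fderiv]
  simp [ContinuousLinearMap.smulRight_apply, smul_eq_mul]
  ring

lemma sdd_sumsq (ℓ : Fin n → (EuclideanSpace ℝ (Fin n) →L[ℝ] ℝ))
    (x v : EuclideanSpace ℝ (Fin n)) :
    sdd (fun z => ∑ i, (ℓ i z) * (ℓ i z)) x v = ∑ i, 2 * ((ℓ i v) * (ℓ i v)) := by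
  have h1 : fderiv ℝ (fun z => ∑ i, (ℓ i z) * (ℓ i z))
      = fun y => ∑ i, ((ℓ i y) • (ℓ i) + (ℓ i y) • (ℓ i)) := by
    funext y
    exact (HasFDerivAt.fun_sum fun i _ => ((ℓ i).hasFDerivAt.mul (ℓ i).hasFDerivAt)).fderiv
  have h2 : HasFDerivAt (fun y => ∑ i, ((ℓ i y) • (ℓ i) + (ℓ i y) • (ℓ i)))
      (∑ i, ((ℓ i).smulRight (ℓ i) + (ℓ i).smulRight (ℓ i))) x :=
    HasFDerivAt.fun_sum fun i _ =>
      ((ℓ i).hasFDerivAt.smul_const (ℓ i)).add ((ℓ i).hasFDerivAt.smul_const (ℓ i))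
  unfold sdd
  rw [h1, h2.fderiv]
  simp [ContinuousLinearMap.sum_apply, ContinuousLinearMap.smulRight_apply, smul_eq_mul]
  exact Finset.sum_congr rfl fun i _ => by ring

lemma contDiffAt_affine_mul (ℓ : EuclideanSpace ℝ (Fin n) →L[ℝ] ℝ) (a b : ℝ)
    (x : EuclideanSpace ℝ (Fin n)) :
    ContDiffAt ℝ 2 (fun z => (ℓ z + a) * (b - ℓ z)) x :=
  ((ℓ.contDiff.add contDiff_const).mul (contDiff_const.sub ℓ.contDiff)).contDiffAt

lemma contDiffAt_sumsq (ℓ : Fin n → (EuclideanSpace ℝ (Fin n) →L[ℝ] ℝ))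
    (x : EuclideanSpace ℝ (Fin n)) :
    ContDiffAt ℝ 2 (fun z => ∑ i, (ℓ i z) * (ℓ i z)) x :=
  (ContDiff.sum fun i _ => (ℓ i).contDiff.mul (ℓ i).contDiff).contDiffAt


/-- Second derivative test: at an interior local maximum, all second directional
derivatives are nonpositive. -/
lemma sdd_nonpos_of_isLocalMax {f : EuclideanSpace ℝ (Fin n) → ℝ}
    {x : EuclideanSpace ℝ (Fin n)} (hf : ContDiffAt ℝ 2 f x) (hmax : IsLocalMax f x)
    (v : EuclideanSpace ℝ (Fin n)) : sdd f x v ≤ 0 := by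
  by_contra hS'
  push_neg at hS'
  set L : ℝ → EuclideanSpace ℝ (Fin n) := fun t => x + t • v with hLdef
  have hL0 : L 0 = x := by simp [hLdef]
  have hLd : ∀ t : ℝ, HasDerivAt L v t := by
    intro t
    simpa [hLdef] using ((hasDerivAt_id t).smul_const v).const_add x
  have hLt : Tendsto L (nhds 0) (nhds x) := by
    have : ContinuousAt L 0 := ((hLd 0).continuousAt)
    rwa [ContinuousAt, hL0] at this
  set ψ : ℝ → ℝ := fun t => fderiv ℝ f (L t) v with hψdef
  -- ψ has derivative sdd f x v at 0
  have hT : HasFDerivAt (fderiv ℝ f) (fderiv ℝ (fderiv ℝ f) x) x := (diff_fderiv hf).hasFDerivAt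
  have happ : HasFDerivAt (fun y => fderiv ℝ f y v)
      ((ContinuousLinearMap.apply ℝ ℝ v).comp (fderiv ℝ (fderiv ℝ f) x)) x :=
    (ContinuousLinearMap.apply ℝ ℝ v).hasFDerivAt.comp x hT
  have hψd : HasDerivAt ψ (sdd f x v) 0 := by
    have happ' : HasFDerivAt (fun y => fderiv ℝ f y v)
        (((ContinuousLinearMap.apply ℝ ℝ) v).comp (fderiv ℝ (fderiv ℝ f) x)) (L 0) := by
      rw [hL0]; exact happ
    have h := happ'.comp_hasDerivAt 0 (hLd 0)
    simpa [Function.comp_def, sdd] using h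
  have hψ0 : ψ 0 = 0 := by
    simp [hψdef, hL0, hmax.fderiv_eq_zero]
  -- ψ is positive on a right neighborhood of 0
  have hslope : Tendsto (slope ψ 0) (nhdsWithin 0 (Set.Ioi 0)) (nhds (sdd f x v)) :=
    (hasDerivAt_iff_tendsto_slope.mp hψd).mono_left
      (nhdsWithin_mono 0 (fun t ht => ne_of_gt ht))
  have hpos : ∀ᶠ t in nhdsWithin 0 (Set.Ioi 0), 0 < slope ψ 0 t :=
    (tendsto_order.1 hslope).1 0 hS'
  have hpos' : ∀ᶠ t in nhdsWithin 0 (Set.Ioi 0), 0 < ψ t := by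
    filter_upwards [hpos, self_mem_nhdsWithin] with t h1 (h2 : 0 < t)
    have : slope ψ 0 t = ψ t / t := by
      simp [slope_def_field, hψ0]
    rw [this] at h1
    have := mul_pos h1 h2
    rwa [div_mul_cancel₀] at this
    exact ne_of_gt h2
  -- differentiability of g := f ∘ L near 0 with derivative ψ
  have hgd : ∀ᶠ t in nhds 0, HasDerivAt (fun s => f (L s)) (ψ t) t := by
    filter_upwards [hLt.eventually (ev_diff hf)] with t ht
    exact ht.hasFDerivAt.comp_hasDerivAt t (hLd t)
  -- local max of g at 0
  have hgmax : ∀ᶠ t in nhds 0, f (L t) ≤ f x := hLt.eventually hmax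
  -- extract δ's
  rw [Metric.eventually_nhds_iff] at hgd hgmax
  obtain ⟨δ₁, hδ₁, h₁⟩ := hgd
  obtain ⟨δ₂, hδ₂, h₂⟩ := hgmax
  rw [eventually_nhdsWithin_iff, Metric.eventually_nhds_iff] at hpos'
  obtain ⟨δ₃, hδ₃, h₃⟩ := hpos'
  set t₀ : ℝ := min (min δ₁ δ₂) δ₃ / 2 with ht₀def
  have hm : 0 < min (min δ₁ δ₂) δ₃ := by positivity
  have ht₀pos : 0 < t₀ := by positivity
  have ht₀m : t₀ < min (min δ₁ δ₂) δ₃ := half_lt_self hm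
  have ht₀lt₁ : t₀ < δ₁ := ht₀m.trans_le ((min_le_left _ _).trans (min_le_left _ _))
  have ht₀lt₂ : t₀ < δ₂ := ht₀m.trans_le ((min_le_left _ _).trans (min_le_right _ _))
  have ht₀lt₃ : t₀ < δ₃ := ht₀m.trans_le (min_le_right _ _)
  -- MVT on [0, t₀]
  have hcont : ContinuousOn (fun s => f (L s)) (Set.Icc 0 t₀) := by
    intro t ht
    have hd : dist t (0:ℝ) < δ₁ := by
      rw [Real.dist_eq, sub_zero, abs_of_nonneg ht.1]
      exact lt_of_le_of_lt ht.2 ht₀lt₁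
    exact ((h₁ hd).continuousAt).continuousWithinAt
  have hdiff : ∀ t ∈ Set.Ioo (0:ℝ) t₀, HasDerivAt (fun s => f (L s)) (ψ t) t := by
    intro t ht
    apply h₁
    rw [Real.dist_eq, sub_zero, abs_of_nonneg (le_of_lt ht.1)]
    exact lt_trans ht.2 ht₀lt₁
  obtain ⟨c, hc, hceq⟩ := exists_hasDerivAt_eq_slope (fun s => f (L s)) ψ ht₀pos hcont hdiff
  have hψc : 0 < ψ c := by
    apply h₃ ?_ hc.1
    rw [Real.dist_eq, sub_zero, abs_of_nonneg (le_of_lt hc.1)]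
    exact lt_trans hc.2 ht₀lt₃
  rw [hceq, sub_zero] at hψc
  have hnum : 0 < f (L t₀) - f (L 0) := by
    rcases div_pos_iff.mp hψc with ⟨h7, _⟩ | ⟨_, h7⟩
    · exact h7
    · linarith
  have hle : f (L t₀) ≤ f x := by
    apply h₂
    rw [Real.dist_eq, sub_zero, abs_of_nonneg (le_of_lt ht₀pos)]
    exact ht₀lt₂
  rw [hL0] at hnum
  linarith

/-- The maximum principle for (sub)harmonic functions on a compact set. -/
lemma maxp (hn : 0 < n) {K : Set (EuclideanSpace ℝ (Fin n))} (hK : IsCompact K)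
    {v : EuclideanSpace ℝ (Fin n) → ℝ} (hv : ContinuousOn v K)
    (hv2 : ∀ x ∈ interior K, ContDiffAt ℝ 2 v x)
    (hsub : ∀ x ∈ interior K, 0 ≤ ∑ i, sdd v x (EuclideanSpace.single i (1 : ℝ)))
    {M : ℝ} (hM : ∀ x ∈ K \ interior K, v x ≤ M) :
    ∀ x ∈ K, v x ≤ M := by
  intro z hz
  set N : EuclideanSpace ℝ (Fin n) → ℝ :=
    fun y => ∑ i, (EuclideanSpace.proj i y) * (EuclideanSpace.proj i y) with hNdef
  have hNc : Continuous N := by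
    apply continuous_finset_sum
    intro i _
    exact ((EuclideanSpace.proj i).continuous).mul ((EuclideanSpace.proj i).continuous)
  have hN0 : ∀ y, 0 ≤ N y := fun y => Finset.sum_nonneg fun i _ => mul_self_nonneg _
  obtain ⟨w₁, hw₁K, hw₁⟩ := hK.exists_isMaxOn ⟨z, hz⟩ hNc.continuousOn
  set C : ℝ := N w₁ with hCdef
  have hNle : ∀ y ∈ K, N y ≤ C := fun y hy => hw₁ hy
  -- single i 1 sums
  have hNsdd : ∀ x : EuclideanSpace ℝ (Fin n),
      ∑ i, sdd N x (EuclideanSpace.single i (1 : ℝ)) = 2 * n := by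
    intro x
    have : ∀ i : Fin n, sdd N x (EuclideanSpace.single i (1 : ℝ)) = 2 := by
      intro i
      rw [hNdef, sdd_sumsq]
      have : ∀ j : Fin n, 2 * ((EuclideanSpace.proj j) (EuclideanSpace.single i (1:ℝ)) *
          (EuclideanSpace.proj j) (EuclideanSpace.single i (1:ℝ)))
          = if i = j then 2 else 0 := by
        intro j
        by_cases h : i = j <;> simp [EuclideanSpace.single_apply, h, eq_comm]
      rw [Finset.sum_congr rfl fun j _ => this j]
      simp
    rw [Finset.sum_congr rfl fun i _ => this i]
    simp [mul_comm]
  -- main estimate for fixed ε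
  have key : ∀ ε : ℝ, 0 < ε → v z + ε * N z ≤ M + ε * C := by
    intro ε hε
    set F : EuclideanSpace ℝ (Fin n) → ℝ := fun y => v y + ε * N y with hFdef
    have hFc : ContinuousOn F K := hv.add ((continuous_const.mul hNc).continuousOn)
    obtain ⟨w₀, hw₀K, hw₀⟩ := hK.exists_isMaxOn ⟨z, hz⟩ hFc
    by_cases hw₀i : w₀ ∈ interior K
    · exfalso
      have hFmax : IsLocalMax F w₀ := hw₀.isLocalMax (mem_interior_iff_mem_nhds.mp hw₀i)
      have hNC2 : ContDiffAt ℝ 2 N w₀ := contDiffAt_sumsq _ w₀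
      have hFC2 : ContDiffAt ℝ 2 F w₀ := (hv2 w₀ hw₀i).add (contDiffAt_const.mul hNC2)
      have h1 : ∀ i : Fin n, sdd F w₀ (EuclideanSpace.single i (1:ℝ)) ≤ 0 :=
        fun i => sdd_nonpos_of_isLocalMax hFC2 hFmax _
      have h2 : ∀ w, sdd F w₀ w = sdd v w₀ w + ε * sdd N w₀ w := by
        intro w
        rw [hFdef]
        rw [sdd_add (hv2 w₀ hw₀i) (contDiffAt_const.mul hNC2), sdd_const_mul hNC2]
      have h3 : ∑ i, sdd F w₀ (EuclideanSpace.single i (1:ℝ))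
          = (∑ i, sdd v w₀ (EuclideanSpace.single i (1:ℝ))) + ε * (2 * n) := by
        rw [Finset.sum_congr rfl fun i _ => h2 _]
        rw [Finset.sum_add_distrib, ← Finset.mul_sum, hNsdd]
      have h4 : ∑ i, sdd F w₀ (EuclideanSpace.single i (1:ℝ)) ≤ 0 :=
        Finset.sum_nonpos fun i _ => h1 i
      have h5 := hsub w₀ hw₀i
      have h6 : (0:ℝ) < ε * (2 * n) := by
        have : (0:ℝ) < (n:ℝ) := by exact_mod_cast hn
        positivity
      linarith
    · have h7 : F z ≤ F w₀ := hw₀ hz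
      have h8 : v w₀ ≤ M := hM w₀ ⟨hw₀K, hw₀i⟩
      have h9 : ε * N w₀ ≤ ε * C := by
        apply mul_le_mul_of_nonneg_left (hNle w₀ hw₀K) (le_of_lt hε)
      calc v z + ε * N z = F z := rfl
        _ ≤ F w₀ := h7
        _ = v w₀ + ε * N w₀ := rfl
        _ ≤ M + ε * C := add_le_add h8 h9
  -- let ε → 0
  have : ∀ ε' : ℝ, 0 < ε' → v z ≤ M + ε' := by
    intro ε' hε'
    have hD : (0:ℝ) ≤ C - N z := by
      have := hNle z hz
      linarith
    set ε : ℝ := ε' / (C - N z + 1) with hεdef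
    have hε : 0 < ε := by positivity
    have h1 := key ε hε
    have h2 : ε * (C - N z) ≤ ε' := by
      rw [hεdef, div_mul_eq_mul_div, div_le_iff₀ (by positivity)]
      nlinarith
    nlinarith
  by_contra hcon
  push_neg at hcon
  obtain ⟨ε', hε', hlt⟩ : ∃ ε' : ℝ, 0 < ε' ∧ M + ε' < v z :=
    ⟨(v z - M)/2, by linarith, by linarith⟩
  exact absurd (this ε' hε') (by linarith)

lemma line_hasDerivAt {f : EuclideanSpace ℝ (Fin n) → ℝ} {x w : EuclideanSpace ℝ (Fin n)}
    (hf : DifferentiableAt ℝ f x) :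
    HasDerivAt (fun t : ℝ => f (x + t • w)) (fderiv ℝ f x w) 0 := by
  have hLd : HasDerivAt (fun t : ℝ => x + t • w) w 0 := by
    simpa using ((hasDerivAt_id (0:ℝ)).smul_const w).const_add x
  have hF : HasFDerivAt f (fderiv ℝ f x) ((fun t : ℝ => x + t • w) 0) := by
    simpa using hf.hasFDerivAt
  have h := hF.comp_hasDerivAt 0 hLd
  simpa [Function.comp_def] using h

lemma deriv_le_of_slope {g : ℝ → ℝ} {S C : ℝ} (hg : HasDerivAt g S 0)
    (h : ∀ᶠ t in nhdsWithin 0 (Set.Ioi 0), g t - g 0 ≤ C * t) : S ≤ C := by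
  have hs : Tendsto (slope g 0) (nhdsWithin 0 (Set.Ioi 0)) (nhds S) :=
    (hasDerivAt_iff_tendsto_slope.mp hg).mono_left
      (nhdsWithin_mono 0 fun t ht => ne_of_gt ht)
  apply le_of_tendsto hs
  filter_upwards [h, self_mem_nhdsWithin] with t h1 (h2 : 0 < t)
  rw [slope_def_field, div_le_iff₀ (by linarith : (0:ℝ) < t - 0)]
  rw [sub_zero]
  linarith

lemma deriv_nonneg_of_slope {g : ℝ → ℝ} {S : ℝ} (hg : HasDerivAt g S 0)
    (h : ∀ᶠ t in nhdsWithin 0 (Set.Ioi 0), g 0 ≤ g t) : 0 ≤ S := by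
  have hs : Tendsto (slope g 0) (nhdsWithin 0 (Set.Ioi 0)) (nhds S) :=
    (hasDerivAt_iff_tendsto_slope.mp hg).mono_left
      (nhdsWithin_mono 0 fun t ht => ne_of_gt ht)
  apply ge_of_tendsto hs
  filter_upwards [h, self_mem_nhdsWithin] with t h1 (h2 : 0 < t)
  rw [slope_def_field]
  apply div_nonneg (by linarith) (by linarith)

lemma contDiffAt_translate {f : EuclideanSpace ℝ (Fin n) → ℝ} {x c : EuclideanSpace ℝ (Fin n)}
    (hf : ContDiffAt ℝ 2 f (x + c)) : ContDiffAt ℝ 2 (fun z => f (z + c)) x := by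
  have h := hf.comp x (((contDiff_id.add contDiff_const)).contDiffAt :
    ContDiffAt ℝ 2 (fun z : EuclideanSpace ℝ (Fin n) => z + c) x)
  simpa [Function.comp_def] using h

lemma sdd_translate {f : EuclideanSpace ℝ (Fin n) → ℝ} {x c v : EuclideanSpace ℝ (Fin n)}
    (hf : ContDiffAt ℝ 2 f (x + c)) :
    sdd (fun z => f (z + c)) x v = sdd f (x + c) v := by
  have h1 : ∀ᶠ y in nhds x, DifferentiableAt ℝ f (y + c) :=
    ((continuous_add_right c).tendsto x).eventually (ev_diff hf)
  have h2 : fderiv ℝ (fun z => f (z + c)) =ᶠ[nhds x] (fun y => fderiv ℝ f (y + c)) := by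
    filter_upwards [h1] with y hy
    have hid : HasFDerivAt (fun z : EuclideanSpace ℝ (Fin n) => z + c)
        (ContinuousLinearMap.id ℝ _) y := (hasFDerivAt_id y).add_const c
    have h := hy.hasFDerivAt.comp y hid
    rw [ContinuousLinearMap.comp_id] at h
    simpa [Function.comp_def] using h.fderiv
  unfold sdd
  rw [h2.fderiv_eq]
  have hd2 : DifferentiableAt ℝ (fderiv ℝ f) (x + c) := diff_fderiv hf
  have hid : HasFDerivAt (fun z : EuclideanSpace ℝ (Fin n) => z + c)
      (ContinuousLinearMap.id ℝ _) x := (hasFDerivAt_id x).add_const c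
  have h3 := hd2.hasFDerivAt.comp x hid
  rw [ContinuousLinearMap.comp_id] at h3
  have h4 : fderiv ℝ (fun y => fderiv ℝ f (y + c)) x = fderiv ℝ (fderiv ℝ f) (x + c) := by
    simpa [Function.comp_def] using h3.fderiv
  rw [h4]

lemma u_nonneg {Ω : Set (EuclideanSpace ℝ (Fin n))} {u : EuclideanSpace ℝ (Fin n) → ℝ}
    (hn : 0 < n) (hΩcpt : IsCompact Ω)
    (hC2 : ∀ x ∈ interior Ω, ContDiffAt ℝ 2 u x) (hcont : ContinuousOn u Ω)
    (hlap' : ∀ x ∈ interior Ω, ∑ i, sdd u x (EuclideanSpace.single i (1:ℝ)) = -2)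
    (hbd' : ∀ x ∈ Ω \ interior Ω, u x = 0) : ∀ z ∈ Ω, 0 ≤ u z := by
  intro z hz
  have hsub : ∀ x ∈ interior Ω,
      0 ≤ ∑ i, sdd (fun y => -(u y)) x (EuclideanSpace.single i (1:ℝ)) := by
    intro x hx
    have h : ∑ i, sdd (fun y => -(u y)) x (EuclideanSpace.single i (1:ℝ))
        = -∑ i, sdd u x (EuclideanSpace.single i (1:ℝ)) := by
      rw [← Finset.sum_neg_distrib]
      exact Finset.sum_congr rfl fun i _ => sdd_neg
    rw [h, hlap' x hx]
    norm_num
  have h := maxp (v := fun y => -(u y)) hn hΩcpt hcont.neg (fun x hx => (hC2 x hx).neg) hsub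
    (M := 0) (fun x hx => by rw [hbd' x hx]; simp) z hz
  linarith

lemma barrier {Ω : Set (EuclideanSpace ℝ (Fin n))} {u : EuclideanSpace ℝ (Fin n) → ℝ}
    (hn : 0 < n) (hΩcpt : IsCompact Ω)
    (hC2 : ∀ x ∈ interior Ω, ContDiffAt ℝ 2 u x) (hcont : ContinuousOn u Ω)
    (hlap' : ∀ x ∈ interior Ω, ∑ i, sdd u x (EuclideanSpace.single i (1:ℝ)) = -2)
    (hbd' : ∀ x ∈ Ω \ interior Ω, u x = 0)
    (ν p : EuclideanSpace ℝ (Fin n)) (hν : ‖ν‖ = 1) (hp : p ∈ Ω)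
    (hsupp : ∀ y ∈ Ω, (inner ℝ ν p : ℝ) ≤ inner ℝ ν y) :
    ∀ z ∈ Ω, u z ≤ diam Ω * ((inner ℝ ν z : ℝ) - inner ℝ ν p) := by
  set ℓ : EuclideanSpace ℝ (Fin n) →L[ℝ] ℝ := innerSL ℝ ν with hℓdef
  have hℓ : ∀ y, ℓ y = (inner ℝ ν y : ℝ) := fun y => rfl
  set a : ℝ := -(inner ℝ ν p : ℝ) with hadef
  set b : ℝ := (inner ℝ ν p : ℝ) + diam Ω with hbdef
  set B : EuclideanSpace ℝ (Fin n) → ℝ := fun y => (ℓ y + a) * (b - ℓ y) with hBdef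
  have hfac1 : ∀ z ∈ Ω, 0 ≤ ℓ z + a := by
    intro z hz
    rw [hℓ, hadef]
    linarith [hsupp z hz]
  have hfac2 : ∀ z ∈ Ω, 0 ≤ b - ℓ z := by
    intro z hz
    have h1 : (inner ℝ ν z : ℝ) - inner ℝ ν p = inner ℝ ν (z - p) := by rw [inner_sub_right]
    have h2 : (inner ℝ ν (z - p) : ℝ) ≤ ‖ν‖ * ‖z - p‖ := real_inner_le_norm _ _
    have h3 : ‖z - p‖ ≤ diam Ω := by
      rw [← dist_eq_norm]
      exact dist_le_diam_of_mem hΩcpt.isBounded hz hp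
    rw [hℓ, hbdef]
    rw [hν, one_mul] at h2
    linarith
  have hB2 : ∀ x, ContDiffAt ℝ 2 B x := fun x => contDiffAt_affine_mul ℓ a b x
  have hBcont : Continuous B :=
    ((ℓ.continuous.add continuous_const).mul (continuous_const.sub ℓ.continuous))
  have hsum : ∑ i, (ℓ (EuclideanSpace.single i (1:ℝ))) * (ℓ (EuclideanSpace.single i (1:ℝ))) = 1 := by
    have h1 : ∀ i : Fin n, ℓ (EuclideanSpace.single i (1:ℝ)) = ν i := by
      intro i
      rw [hℓ, EuclideanSpace.inner_single_right]
      simp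
    rw [Finset.sum_congr rfl fun i _ => by rw [h1 i]]
    have h2 : (inner ℝ ν ν : ℝ) = ∑ i, ν i * ν i := by
      rw [PiLp.inner_apply]
      simp [RCLike.inner_apply, sq]
    have h3 : (inner ℝ ν ν : ℝ) = 1 := by
      rw [real_inner_self_eq_norm_mul_norm, hν, one_mul]
    rw [← h2, h3]
  have hsub : ∀ x ∈ interior Ω,
      0 ≤ ∑ i, sdd (fun y => u y - B y) x (EuclideanSpace.single i (1:ℝ)) := by
    intro x hx
    have h1 : ∀ i : Fin n, sdd (fun y => u y - B y) x (EuclideanSpace.single i (1:ℝ))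
        = sdd u x (EuclideanSpace.single i (1:ℝ))
          - (-2 * (ℓ (EuclideanSpace.single i (1:ℝ)) * ℓ (EuclideanSpace.single i (1:ℝ)))) := by
      intro i
      rw [sdd_sub (hC2 x hx) (hB2 x), hBdef, sdd_affine_mul]
    rw [Finset.sum_congr rfl fun i _ => h1 i, Finset.sum_sub_distrib, hlap' x hx]
    have h2 : ∑ i, (-2 * (ℓ (EuclideanSpace.single i (1:ℝ)) * ℓ (EuclideanSpace.single i (1:ℝ))))
        = -2 * ∑ i, (ℓ (EuclideanSpace.single i (1:ℝ)) * ℓ (EuclideanSpace.single i (1:ℝ))) := by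
      rw [Finset.mul_sum]
    rw [h2, hsum]
    norm_num
  have hbd2 : ∀ x ∈ Ω \ interior Ω, u x - B x ≤ 0 := by
    intro x hx
    rw [hbd' x hx]
    have := mul_nonneg (hfac1 x hx.1) (hfac2 x hx.1)
    rw [hBdef]
    simp only [zero_sub, neg_nonpos]
    exact this
  intro z hz
  have h := maxp (v := fun y => u y - B y) hn hΩcpt (hcont.sub hBcont.continuousOn)
    (fun x hx => (hC2 x hx).sub (hB2 x)) hsub (M := 0) hbd2 z hz
  have h2 : B z ≤ (ℓ z + a) * diam Ω := by
    apply mul_le_mul_of_nonneg_left _ (hfac1 z hz)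
    rw [hℓ, hbdef]
    linarith [hsupp z hz]
  have h3 : (ℓ z + a) * diam Ω = diam Ω * ((inner ℝ ν z : ℝ) - inner ℝ ν p) := by
    rw [hℓ, hadef]; ring
  linarith

lemma supporting {Ω : Set (EuclideanSpace ℝ (Fin n))}
    (hΩconv : Convex ℝ Ω) (hΩint : (interior Ω).Nonempty)
    {p : EuclideanSpace ℝ (Fin n)} (hp : p ∈ Ω) (hpi : p ∉ interior Ω) :
    ∃ ν : EuclideanSpace ℝ (Fin n), ‖ν‖ = 1 ∧ ∀ y ∈ Ω, (inner ℝ ν p : ℝ) ≤ inner ℝ ν y := by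
  obtain ⟨f, hf⟩ := geometric_hahn_banach_open_point (hΩconv.interior) isOpen_interior hpi
  obtain ⟨x₀, hx₀⟩ := hΩint
  have hext : ∀ y ∈ Ω, f y ≤ f p := by
    intro y hy
    have hcont : Continuous (fun t : ℝ => y + t • (x₀ - y)) := by
      exact continuous_const.add (continuous_id.smul continuous_const)
    have hseq : Tendsto (fun t : ℝ => y + t • (x₀ - y))
        (nhdsWithin (0:ℝ) (Set.Ioi 0)) (nhds y) := by
      have h : Tendsto (fun t : ℝ => y + t • (x₀ - y)) (nhds 0) (nhds y) := by
        simpa using hcont.tendsto (0:ℝ)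
      exact h.mono_left nhdsWithin_le_nhds
    have h1 : ∀ᶠ t in nhdsWithin (0:ℝ) (Set.Ioi 0), t < 1 :=
      eventually_nhdsWithin_of_eventually_nhds
        (by filter_upwards [Iio_mem_nhds (by norm_num : (0:ℝ) < 1)] with t ht; exact ht)
    have hev : ∀ᶠ t in nhdsWithin (0:ℝ) (Set.Ioi 0),
        (⇑f ∘ fun t : ℝ => y + t • (x₀ - y)) t ≤ f p := by
      filter_upwards [self_mem_nhdsWithin, h1] with t (ht : 0 < t) ht1
      have hmem : y + t • (x₀ - y) ∈ interior Ω :=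
        hΩconv.add_smul_sub_mem_interior hy hx₀ ⟨ht, le_of_lt ht1⟩
      exact le_of_lt (hf _ hmem)
    exact le_of_tendsto ((f.continuous.tendsto y).comp hseq) hev
  have hne : f x₀ < f p := hf x₀ hx₀
  set ν₀ : EuclideanSpace ℝ (Fin n) :=
    -((InnerProductSpace.toDual ℝ (EuclideanSpace ℝ (Fin n))).symm f) with hν₀def
  have hν₀app : ∀ y, (inner ℝ ν₀ y : ℝ) = -(f y) := by
    intro y
    rw [hν₀def, inner_neg_left, InnerProductSpace.toDual_symm_apply]
  have hν₀ne : ν₀ ≠ 0 := by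
    intro hcon
    have h1 := hν₀app x₀
    have h2 := hν₀app p
    rw [hcon, inner_zero_left] at h1 h2
    have : f x₀ = f p := by linarith
    linarith
  refine ⟨‖ν₀‖⁻¹ • ν₀, ?_, ?_⟩
  · rw [norm_smul, norm_inv, norm_norm]
    field_simp
  · intro y hy
    rw [real_inner_smul_left, real_inner_smul_left]
    apply mul_le_mul_of_nonneg_left _ (by positivity)
    rw [hν₀app, hν₀app]
    linarith [hext y hy]

end

theorem stmt14 {n : ℕ} (Ω : Set (EuclideanSpace ℝ (Fin n)))
    (hΩconv : Convex ℝ Ω) (hΩcpt : IsCompact Ω) (hΩint : (interior Ω).Nonempty)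
    (u : EuclideanSpace ℝ (Fin n) → ℝ)
    (hu : ContDiffOn ℝ 2 u Ω)
    (hlap : ∀ x ∈ interior Ω,
      (∑ i : Fin n, iteratedFDeriv ℝ 2 u x
        ![EuclideanSpace.single i (1 : ℝ), EuclideanSpace.single i (1 : ℝ)]) = -2)
    (hbd : ∀ x ∈ frontier Ω, u x = 0) :
    (∀ x ∈ Ω, ‖gradient u x‖ ≤ diam Ω) ∧
      ∫ x in Ω, ‖gradient u x‖ ^ 2 ≤ diam Ω ^ 2 * (volume Ω).toReal := by
  rcases Nat.eq_zero_or_pos n with hn0 | hn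
  · obtain ⟨x, hx⟩ := hΩint
    have h := hlap x hx
    subst hn0
    simp at h
  have hΩclosed : IsClosed Ω := hΩcpt.isClosed
  have hbd' : ∀ x ∈ Ω \ interior Ω, u x = 0 := by
    intro x hx
    apply hbd
    rw [hΩclosed.frontier_eq]
    exact hx
  have hC2 : ∀ x ∈ interior Ω, ContDiffAt ℝ 2 u x := by
    intro x hx
    exact hu.contDiffAt (mem_interior_iff_mem_nhds.mp hx)
  have hcont : ContinuousOn u Ω := hu.continuousOn
  have hlap' : ∀ x ∈ interior Ω,
      ∑ i, sdd u x (EuclideanSpace.single i (1:ℝ)) = -2 := by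
    intro x hx
    rw [← hlap x hx]
    apply Finset.sum_congr rfl
    intro i _
    rw [iteratedFDeriv_two_apply]
    simp [sdd]
  have hd0 : (0:ℝ) ≤ diam Ω := diam_nonneg
  have hnn : ∀ z ∈ Ω, 0 ≤ u z := u_nonneg hn hΩcpt hC2 hcont hlap' hbd'
  have part1 : ∀ x ∈ Ω, ‖gradient u x‖ ≤ diam Ω := by
    intro x hx
    by_cases hdiff : DifferentiableAt ℝ u x
    · set G := gradient u x with hGdef
      have hGinner : ∀ w, (inner ℝ G w : ℝ) = fderiv ℝ u x w := by
        intro w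
        rw [hGdef]
        exact InnerProductSpace.toDual_symm_apply
      by_cases hGz : G = 0
      · rw [hGz]
        simpa using hd0
      have hGn : 0 < ‖G‖ := norm_pos_iff.mpr hGz
      by_cases hxint : x ∈ interior Ω
      · -- interior case, via translation trick
        set e : EuclideanSpace ℝ (Fin n) := ‖G‖⁻¹ • G with hedef
        have hne : ‖e‖ = 1 := by
          rw [hedef, norm_smul, norm_inv, norm_norm]
          field_simp
        obtain ⟨h₀, hh₀pos, hball⟩ := Metric.isOpen_iff.mp isOpen_interior x hxint
        have keydiff : ∀ h : ℝ, 0 < h → h < h₀ → u (x + h • e) - u x ≤ diam Ω * h := by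
          intro h hhpos hhlt
          have hxe : x + h • e ∈ interior Ω := by
            apply hball
            rw [Metric.mem_ball, dist_eq_norm]
            simp only [add_sub_cancel_left]
            rw [norm_smul, hne, Real.norm_eq_abs, abs_of_pos hhpos, mul_one]
            exact hhlt
          set c : EuclideanSpace ℝ (Fin n) := h • e with hcdef
          set K : Set (EuclideanSpace ℝ (Fin n)) := Ω ∩ (fun z => z + c) ⁻¹' Ω with hKdef
          have hKcl : IsClosed ((fun z : EuclideanSpace ℝ (Fin n) => z + c) ⁻¹' Ω) :=
            hΩclosed.preimage (continuous_add_right c)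
          have hKcpt : IsCompact K := hΩcpt.inter_right hKcl
          have htr : ∀ S : Set (EuclideanSpace ℝ (Fin n)),
              (fun z => z + c) ⁻¹' interior S = interior ((fun z => z + c) ⁻¹' S) := by
            intro S
            have hh := (Homeomorph.addRight c).preimage_interior S
            simpa using hh
          have hKint : interior K = interior Ω ∩ (fun z => z + c) ⁻¹' interior Ω := by
            rw [hKdef, interior_inter, htr]
          set W : EuclideanSpace ℝ (Fin n) → ℝ := fun z => u (z + c) - u z with hWdef
          have hWcont : ContinuousOn W K := by
            apply ContinuousOn.sub
            · apply ContinuousOn.comp hcont ((continuous_add_right c).continuousOn)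
              intro z hz
              exact hz.2
            · exact hcont.mono (fun z hz => hz.1)
          have hWC2 : ∀ z ∈ interior K, ContDiffAt ℝ 2 W z := by
            intro z hz
            rw [hKint] at hz
            exact (contDiffAt_translate (hC2 _ hz.2)).sub (hC2 z hz.1)
          have hWsub : ∀ z ∈ interior K,
              0 ≤ ∑ i, sdd W z (EuclideanSpace.single i (1:ℝ)) := by
            intro z hz
            rw [hKint] at hz
            have h1 : ∀ i : Fin n, sdd W z (EuclideanSpace.single i (1:ℝ))
                = sdd u (z + c) (EuclideanSpace.single i (1:ℝ))
                  - sdd u z (EuclideanSpace.single i (1:ℝ)) := by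
              intro i
              rw [hWdef, sdd_sub (contDiffAt_translate (hC2 _ hz.2)) (hC2 z hz.1),
                sdd_translate (hC2 _ hz.2)]
            rw [Finset.sum_congr rfl fun i _ => h1 i, Finset.sum_sub_distrib,
              hlap' _ hz.2, hlap' z hz.1]
            norm_num
          have hWbd : ∀ z ∈ K \ interior K, W z ≤ diam Ω * h := by
            intro z hz
            obtain ⟨⟨hz1, hz2⟩, hz3⟩ := hz
            rw [hKint, Set.mem_inter_iff, not_and_or] at hz3
            have hdh : 0 ≤ diam Ω * h := by positivity
            rcases hz3 with hz3 | hz3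
            · have hzfr : z ∈ Ω \ interior Ω := ⟨hz1, hz3⟩
              obtain ⟨ν, hν1, hsupp⟩ := supporting hΩconv hΩint hz1 hz3
              have hb := barrier hn hΩcpt hC2 hcont hlap' hbd' ν z hν1 hz1 hsupp (z + c) hz2
              have h4 : (inner ℝ ν (z + c) : ℝ) - inner ℝ ν z = inner ℝ ν c := by
                rw [inner_add_right]; ring
              have h5 : (inner ℝ ν c : ℝ) ≤ ‖c‖ := by
                have h6 := real_inner_le_norm ν c
                rw [hν1, one_mul] at h6
                exact h6
              have h6 : ‖c‖ = h := by
                rw [hcdef, norm_smul, hne, Real.norm_eq_abs, abs_of_pos hhpos, mul_one]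
              have h7 : u z = 0 := hbd' z hzfr
              have h8 : u (z + c) ≤ diam Ω * h := by
                calc u (z + c) ≤ diam Ω * ((inner ℝ ν (z + c) : ℝ) - inner ℝ ν z) := hb
                  _ ≤ diam Ω * h := by
                      apply mul_le_mul_of_nonneg_left _ hd0
                      rw [h4, ← h6]
                      exact h5
              rw [hWdef]
              simp only
              rw [h7]
              linarith
            · have h7 : u (z + c) = 0 := hbd' _ ⟨hz2, hz3⟩
              have h8 : 0 ≤ u z := hnn z hz1
              rw [hWdef]
              simp only
              rw [h7]
              linarith
          have hxK : x ∈ K := ⟨hx, by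
            rw [Set.mem_preimage]
            exact interior_subset hxe⟩
          have hres := maxp hn hKcpt hWcont hWC2 hWsub hWbd x hxK
          rw [hWdef] at hres
          simpa [hcdef] using hres
        have hS : fderiv ℝ u x e ≤ diam Ω := by
          apply deriv_le_of_slope (line_hasDerivAt hdiff)
          have h1 : ∀ᶠ t in nhdsWithin (0:ℝ) (Set.Ioi 0), t < h₀ :=
            eventually_nhdsWithin_of_eventually_nhds
              (by filter_upwards [Iio_mem_nhds hh₀pos] with t ht; exact ht)
          filter_upwards [self_mem_nhdsWithin, h1]
            with t (ht : 0 < t) ht2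
          have h2 := keydiff t ht ht2
          simpa [mul_comm] using h2
        calc ‖G‖ = (inner ℝ G e : ℝ) := by
              rw [hedef, real_inner_smul_right, real_inner_self_eq_norm_mul_norm]
              field_simp
          _ = fderiv ℝ u x e := hGinner e
          _ ≤ diam Ω := hS
      · -- boundary case
        have hxfr : x ∈ Ω \ interior Ω := ⟨hx, hxint⟩
        have hux : u x = 0 := hbd' x hxfr
        have hsmall : ∀ᶠ t in nhdsWithin (0:ℝ) (Set.Ioi 0), 0 < t ∧ t < 1 := by
          have h1 : ∀ᶠ t in nhdsWithin (0:ℝ) (Set.Ioi 0), t < 1 :=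
            eventually_nhdsWithin_of_eventually_nhds
              (by filter_upwards [Iio_mem_nhds (by norm_num : (0:ℝ) < 1)] with t ht; exact ht)
          filter_upwards [self_mem_nhdsWithin, h1] with t (ht : 0 < t) ht2
          exact ⟨ht, ht2⟩
        have step1 : ∀ y ∈ Ω, 0 ≤ (inner ℝ G (y - x) : ℝ) := by
          intro y hy
          rw [hGinner]
          apply deriv_nonneg_of_slope (line_hasDerivAt hdiff)
          filter_upwards [hsmall] with t ⟨ht, ht1⟩
          have hmem : x + t • (y - x) ∈ Ω :=
            hΩconv.add_smul_sub_mem hx hy ⟨le_of_lt ht, le_of_lt ht1⟩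
          simp only [zero_smul, add_zero]
          rw [hux]
          exact hnn _ hmem
        set ν : EuclideanSpace ℝ (Fin n) := ‖G‖⁻¹ • G with hνdef
        have hν1 : ‖ν‖ = 1 := by
          rw [hνdef, norm_smul, norm_inv, norm_norm]
          field_simp
        have hsupp : ∀ y ∈ Ω, (inner ℝ ν x : ℝ) ≤ inner ℝ ν y := by
          intro y hy
          have h1 := step1 y hy
          rw [inner_sub_right] at h1
          rw [hνdef, real_inner_smul_left, real_inner_smul_left]
          apply mul_le_mul_of_nonneg_left _ (by positivity)
          linarith
        have hbar := barrier hn hΩcpt hC2 hcont hlap' hbd' ν x hν1 hx hsupp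
        by_contra hcon
        push_neg at hcon
        have step3 : ∀ y ∈ Ω, (inner ℝ G (y - x) : ℝ) ≤ diam Ω * (inner ℝ ν (y - x) : ℝ) := by
          intro y hy
          rw [hGinner]
          apply deriv_le_of_slope (line_hasDerivAt hdiff)
          filter_upwards [hsmall] with t ⟨ht, ht1⟩
          have hmem : x + t • (y - x) ∈ Ω :=
            hΩconv.add_smul_sub_mem hx hy ⟨le_of_lt ht, le_of_lt ht1⟩
          have h2 := hbar _ hmem
          have h3 : (inner ℝ ν (x + t • (y - x)) : ℝ) - inner ℝ ν x = t * inner ℝ ν (y - x) := by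
            rw [inner_add_right, real_inner_smul_right]
            ring
          simp only [zero_smul, add_zero]
          rw [hux, sub_zero]
          calc u (x + t • (y - x))
              ≤ diam Ω * ((inner ℝ ν (x + t • (y - x)) : ℝ) - inner ℝ ν x) := h2
            _ = diam Ω * (inner ℝ ν (y - x) : ℝ) * t := by rw [h3]; ring
        have hq : diam Ω * ‖G‖⁻¹ < 1 := by
          rw [← div_eq_mul_inv, div_lt_one hGn]
          exact hcon
        have step4 : ∀ y ∈ Ω, (inner ℝ G (y - x) : ℝ) = 0 := by
          intro y hy
          have h1 := step1 y hy
          have h3 := step3 y hy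
          have h5 : (inner ℝ ν (y - x) : ℝ) = ‖G‖⁻¹ * inner ℝ G (y - x) := by
            rw [hνdef, real_inner_smul_left]
          rw [h5] at h3
          apply le_antisymm _ h1
          by_contra hs0
          push_neg at hs0
          have h6 := mul_lt_mul_of_pos_right hq hs0
          rw [one_mul] at h6
          have h7 : (inner ℝ G (y - x) : ℝ) ≤ diam Ω * ‖G‖⁻¹ * inner ℝ G (y - x) := by
            rw [mul_assoc]
            exact h3
          linarith
        obtain ⟨z₀, hz₀⟩ := hΩint
        obtain ⟨r, hrpos, hball⟩ := Metric.isOpen_iff.mp isOpen_interior z₀ hz₀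
        set w : EuclideanSpace ℝ (Fin n) := z₀ + (r / 2 * ‖G‖⁻¹) • G with hwdef
        have hwball : w ∈ Metric.ball z₀ r := by
          rw [Metric.mem_ball, dist_eq_norm, hwdef]
          simp only [add_sub_cancel_left]
          rw [norm_smul, Real.norm_eq_abs, abs_of_pos (by positivity), mul_assoc,
            inv_mul_cancel₀ (ne_of_gt hGn), mul_one]
          linarith
        have hwΩ : w ∈ Ω := interior_subset (hball hwball)
        have h1 := step4 w hwΩ
        have h2 := step4 z₀ (interior_subset hz₀)
        rw [inner_sub_right] at h1 h2
        have h3 : (inner ℝ G w : ℝ) - inner ℝ G z₀ = 0 := by linarith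
        rw [hwdef, inner_add_right, real_inner_smul_right,
          real_inner_self_eq_norm_mul_norm] at h3
        have h4 : (r / 2 * ‖G‖⁻¹) * (‖G‖ * ‖G‖) = r / 2 * ‖G‖ := by
          field_simp
        have h5 : r / 2 * ‖G‖ = 0 := by linarith
        have h6 : 0 < r / 2 * ‖G‖ := mul_pos (half_pos hrpos) hGn
        linarith
    · have hz : gradient u x = 0 := by
        unfold gradient
        rw [fderiv_zero_of_not_differentiableAt hdiff]
        simp
      rw [hz]
      simpa using hd0
  refine ⟨part1, ?_⟩
  have hmeas : MeasurableSet Ω := hΩclosed.measurableSet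
  have hfin : volume Ω < ⊤ := hΩcpt.measure_lt_top
  have hb2 : ∀ x ∈ Ω, ‖(‖gradient u x‖ ^ 2)‖ ≤ diam Ω ^ 2 := by
    intro x hx
    rw [Real.norm_eq_abs, abs_of_nonneg (by positivity)]
    have h1 := part1 x hx
    have h0 : 0 ≤ ‖gradient u x‖ := norm_nonneg _
    nlinarith
  have hnorm := norm_setIntegral_le_of_norm_le_const hfin hb2
  calc ∫ x in Ω, ‖gradient u x‖ ^ 2
      ≤ ‖∫ x in Ω, ‖gradient u x‖ ^ 2‖ := by
        rw [Real.norm_eq_abs]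
        exact le_abs_self _
    _ ≤ diam Ω ^ 2 * (volume Ω).toReal := hnorm
end

section
/- Let p_i → p with p > 1, and suppose 1 = (1/(n+2)) ∫_{S^{n-1}} h(K_i, v)^{p_i} dμ(v) for convex bodies K_i containing the origin, where μ is a finite Borel measure on S^{n-1} not concentrated on any closed hemisphere. Then the sequence R_i = max_{u} h(K_i, u) is bounded. -/
open MeasureTheory Metric Filter
open scoped RealInnerProductSpace Topology

theorem stmt15 {n : ℕ} (p : ℝ) (hp : 1 < p) (p' : ℕ → ℝ)
    (hp' : Tendsto p' atTop (𝓝 p))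
    (μ : Measure ↥(sphere (0 : EuclideanSpace ℝ (Fin n)) 1)) [IsFiniteMeasure μ]
    (hμ : ∀ u : ↥(sphere (0 : EuclideanSpace ℝ (Fin n)) 1),
      0 < μ {v | 0 < ⟪(u : EuclideanSpace ℝ (Fin n)), (v : EuclideanSpace ℝ (Fin n))⟫})
    (K : ℕ → Set (EuclideanSpace ℝ (Fin n)))
    (hKconv : ∀ i, Convex ℝ (K i)) (hKcpt : ∀ i, IsCompact (K i))
    (hKint : ∀ i, (interior (K i)).Nonempty)
    (hK0 : ∀ i, (0 : EuclideanSpace ℝ (Fin n)) ∈ K i)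
    (hnorm : ∀ i, (1 / ((n : ℝ) + 2)) *
      ∫ v, suppFn (K i) (v : EuclideanSpace ℝ (Fin n)) ^ (p' i) ∂μ = 1) :
    ∃ C : ℝ, ∀ i, ∀ u : ↥(sphere (0 : EuclideanSpace ℝ (Fin n)) 1),
      suppFn (K i) (u : EuclideanSpace ℝ (Fin n)) ≤ C := by
  by_cases hS : Nonempty ↥(sphere (0 : EuclideanSpace ℝ (Fin n)) 1)
  swap
  · exact ⟨0, fun i u => absurd ⟨u⟩ hS⟩
  -- exponents
  set q : ℝ := p + 1 with hqdef
  set p₀ : ℝ := (1 + p) / 2 with hp₀def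
  have hp₀ : 1 < p₀ := by rw [hp₀def]; linarith
  have hp₀p : p₀ < p := by rw [hp₀def]; linarith
  have hpq : p < q := by rw [hqdef]; linarith
  have hq0 : (0 : ℝ) < q := by linarith
  -- continuity of rpow with fixed nonneg exponent
  have hcpow : Continuous fun t : ℝ => t ^ q :=
    continuous_iff_continuousAt.2 fun x => Real.continuousAt_rpow_const x q (Or.inr hq0.le)
  -- the function F
  set F : ↥(sphere (0 : EuclideanSpace ℝ (Fin n)) 1) → ℝ :=
    fun u => ∫ v, (max ⟪(u : EuclideanSpace ℝ (Fin n)), (v : EuclideanSpace ℝ (Fin n))⟫ 0) ^ q ∂μ with hFdef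
  have hunit : ∀ u : ↥(sphere (0 : EuclideanSpace ℝ (Fin n)) 1), ‖(u : EuclideanSpace ℝ (Fin n))‖ = 1 :=
    fun u => mem_sphere_zero_iff_norm.1 u.2
  have hm01 : ∀ u v : ↥(sphere (0 : EuclideanSpace ℝ (Fin n)) 1), max ⟪(u : EuclideanSpace ℝ (Fin n)), (v : EuclideanSpace ℝ (Fin n))⟫ 0 ≤ 1 := by
    intro u v
    refine max_le ?_ zero_le_one
    calc ⟪(u : EuclideanSpace ℝ (Fin n)), (v : EuclideanSpace ℝ (Fin n))⟫ ≤ ‖(u : EuclideanSpace ℝ (Fin n))‖ * ‖(v : EuclideanSpace ℝ (Fin n))‖ := real_inner_le_norm _ _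
      _ = 1 := by rw [hunit u, hunit v, mul_one]
  have hmeasv : ∀ u : ↥(sphere (0 : EuclideanSpace ℝ (Fin n)) 1),
      Continuous fun v : ↥(sphere (0 : EuclideanSpace ℝ (Fin n)) 1) => (max ⟪(u : EuclideanSpace ℝ (Fin n)), (v : EuclideanSpace ℝ (Fin n))⟫ 0) ^ q :=
    fun u => hcpow.comp ((continuous_const.inner continuous_subtype_val).max continuous_const)
  have hbnd : ∀ u v : ↥(sphere (0 : EuclideanSpace ℝ (Fin n)) 1), ‖(max ⟪(u : EuclideanSpace ℝ (Fin n)), (v : EuclideanSpace ℝ (Fin n))⟫ 0) ^ q‖ ≤ 1 := by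
    intro u v
    rw [Real.norm_eq_abs, abs_of_nonneg (Real.rpow_nonneg (le_max_right _ _) q)]
    exact Real.rpow_le_one (le_max_right _ _) (hm01 u v) hq0.le
  have hFint : ∀ u : ↥(sphere (0 : EuclideanSpace ℝ (Fin n)) 1),
      Integrable (fun v : ↥(sphere (0 : EuclideanSpace ℝ (Fin n)) 1) => (max ⟪(u : EuclideanSpace ℝ (Fin n)), (v : EuclideanSpace ℝ (Fin n))⟫ 0) ^ q) μ := by
    intro u
    exact (integrable_const (1 : ℝ)).mono' (hmeasv u).aestronglyMeasurable
      (Eventually.of_forall fun v => hbnd u v)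
  have hFcont : Continuous F := by
    refine continuous_of_dominated (fun u => (hmeasv u).aestronglyMeasurable)
      (fun u => Eventually.of_forall fun v => hbnd u v) (integrable_const 1) ?_
    exact Eventually.of_forall fun v =>
      hcpow.comp ((continuous_subtype_val.inner continuous_const).max continuous_const)
  have hFpos : ∀ u : ↥(sphere (0 : EuclideanSpace ℝ (Fin n)) 1), 0 < F u := by
    intro u
    rw [hFdef]
    rw [integral_pos_iff_support_of_nonneg
      (fun v => Real.rpow_nonneg (le_max_right _ _) q) (hFint u)]
    refine lt_of_lt_of_le (hμ u) (measure_mono ?_)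
    intro v hv
    simp only [Set.mem_setOf_eq] at hv
    have : max ⟪(u : EuclideanSpace ℝ (Fin n)), (v : EuclideanSpace ℝ (Fin n))⟫ 0 = ⟪(u : EuclideanSpace ℝ (Fin n)), (v : EuclideanSpace ℝ (Fin n))⟫ := max_eq_left hv.le
    simp only [Function.mem_support, this]
    exact ne_of_gt (Real.rpow_pos_of_pos hv q)
  -- minimum of F
  haveI : CompactSpace ↥(sphere (0 : EuclideanSpace ℝ (Fin n)) 1) :=
    isCompact_iff_compactSpace.mp (isCompact_sphere (0 : EuclideanSpace ℝ (Fin n)) 1)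
  obtain ⟨u₀, -, hu₀⟩ := isCompact_univ.exists_isMinOn Set.univ_nonempty hFcont.continuousOn
  set c : ℝ := F u₀ with hcdef
  have hc : 0 < c := hFpos u₀
  have hcmin : ∀ u, c ≤ F u := fun u => hu₀ (Set.mem_univ u)
  -- tail control on exponents
  have hev : ∀ᶠ i in atTop, p' i ∈ Set.Ioo p₀ q := hp' (Ioo_mem_nhds hp₀p hpq)
  obtain ⟨N, hN⟩ := eventually_atTop.1 hev
  -- generic upper bound by a norm-maximizer
  have hub : ∀ i (x : EuclideanSpace ℝ (Fin n)), (∀ y ∈ K i, ‖y‖ ≤ ‖x‖) →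
      ∀ u : ↥(sphere (0 : EuclideanSpace ℝ (Fin n)) 1), suppFn (K i) (u : EuclideanSpace ℝ (Fin n)) ≤ ‖x‖ := by
    intro i x hx u
    refine csSup_le (Set.Nonempty.image _ ⟨0, hK0 i⟩) ?_
    rintro _ ⟨y, hy, rfl⟩
    calc ⟪y, (u : EuclideanSpace ℝ (Fin n))⟫ ≤ ‖y‖ * ‖(u : EuclideanSpace ℝ (Fin n))‖ := real_inner_le_norm _ _
      _ = ‖y‖ := by rw [hunit u, mul_one]
      _ ≤ ‖x‖ := hx y hy
  -- key tail estimate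
  have key : ∀ i, p' i ∈ Set.Ioo p₀ q →
      ∀ u : ↥(sphere (0 : EuclideanSpace ℝ (Fin n)) 1), suppFn (K i) (u : EuclideanSpace ℝ (Fin n)) ≤ max 1 (((n : ℝ) + 2) / c) := by
    intro i hpi
    have hpi1 : 1 < p' i := lt_trans hp₀ hpi.1
    obtain ⟨x, hxK, hx⟩ := (hKcpt i).exists_isMaxOn ⟨0, hK0 i⟩ continuous_norm.continuousOn
    have hx' : ∀ y ∈ K i, ‖y‖ ≤ ‖x‖ := fun y hy => hx hy
    intro u
    refine (hub i x hx' u).trans ?_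
    by_cases hR : ‖x‖ ≤ 1
    · exact hR.trans (le_max_left _ _)
    push_neg at hR
    refine le_max_of_le_right ?_
    set R : ℝ := ‖x‖ with hRdef
    have hR0 : (0 : ℝ) < R := lt_trans one_pos hR
    have hx0 : x ≠ 0 := by
      intro h; rw [hRdef, h, norm_zero] at hR0; exact lt_irrefl _ hR0
    have huumem : R⁻¹ • x ∈ sphere (0 : EuclideanSpace ℝ (Fin n)) 1 := by
      rw [mem_sphere_zero_iff_norm, norm_smul, Real.norm_eq_abs,
        abs_of_pos (inv_pos.2 hR0), inv_mul_cancel₀ (ne_of_gt hR0)]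
    set uu : ↥(sphere (0 : EuclideanSpace ℝ (Fin n)) 1) := ⟨R⁻¹ • x, huumem⟩ with huudef
    have hxuu : x = R • (uu : EuclideanSpace ℝ (Fin n)) := by
      rw [huudef]; simp [smul_smul, mul_inv_cancel₀ (ne_of_gt hR0)]
    -- bddAbove of the image
    have hbdd : ∀ v : ↥(sphere (0 : EuclideanSpace ℝ (Fin n)) 1),
        BddAbove ((fun y => ⟪y, (v : EuclideanSpace ℝ (Fin n))⟫) '' (K i)) := by
      intro v
      refine ⟨‖x‖, ?_⟩
      rintro _ ⟨y, hy, rfl⟩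
      calc ⟪y, (v : EuclideanSpace ℝ (Fin n))⟫ ≤ ‖y‖ * ‖(v : EuclideanSpace ℝ (Fin n))‖ := real_inner_le_norm _ _
        _ = ‖y‖ := by rw [hunit v, mul_one]
        _ ≤ ‖x‖ := hx' y hy
    -- pointwise lower bound on suppFn
    have hlow : ∀ v : ↥(sphere (0 : EuclideanSpace ℝ (Fin n)) 1),
        R * (max ⟪(uu : EuclideanSpace ℝ (Fin n)), (v : EuclideanSpace ℝ (Fin n))⟫ 0) ≤ suppFn (K i) (v : EuclideanSpace ℝ (Fin n)) := by
      intro v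
      have h1 : ⟪x, (v : EuclideanSpace ℝ (Fin n))⟫ ≤ suppFn (K i) (v : EuclideanSpace ℝ (Fin n)) :=
        le_csSup (hbdd v) ⟨x, hxK, rfl⟩
      have h2 : (0 : ℝ) ≤ suppFn (K i) (v : EuclideanSpace ℝ (Fin n)) := by
        have : ⟪(0 : EuclideanSpace ℝ (Fin n)), (v : EuclideanSpace ℝ (Fin n))⟫ ≤ suppFn (K i) (v : EuclideanSpace ℝ (Fin n)) :=
          le_csSup (hbdd v) ⟨0, hK0 i, rfl⟩
        rwa [inner_zero_left] at this
      have hinner : ⟪x, (v : EuclideanSpace ℝ (Fin n))⟫ = R * ⟪(uu : EuclideanSpace ℝ (Fin n)), (v : EuclideanSpace ℝ (Fin n))⟫ := by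
        rw [hxuu, real_inner_smul_left]
      rw [mul_max_of_nonneg _ _ hR0.le, mul_zero]
      exact max_le (hinner ▸ h1) h2
    -- pointwise lower bound on suppFn ^ (p' i)
    have hptwise : ∀ v : ↥(sphere (0 : EuclideanSpace ℝ (Fin n)) 1),
        R * (max ⟪(uu : EuclideanSpace ℝ (Fin n)), (v : EuclideanSpace ℝ (Fin n))⟫ 0) ^ q ≤ suppFn (K i) (v : EuclideanSpace ℝ (Fin n)) ^ (p' i) := by
      intro v
      set m : ℝ := max ⟪(uu : EuclideanSpace ℝ (Fin n)), (v : EuclideanSpace ℝ (Fin n))⟫ 0 with hmdef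
      have hm0 : 0 ≤ m := le_max_right _ _
      have hm1 : m ≤ 1 := hm01 uu v
      have step1 : (R * m) ^ (p' i) ≤ suppFn (K i) (v : EuclideanSpace ℝ (Fin n)) ^ (p' i) :=
        Real.rpow_le_rpow (mul_nonneg hR0.le hm0) (hlow v) (le_of_lt (lt_trans one_pos hpi1))
      have step2 : (R * m) ^ (p' i) = R ^ (p' i) * m ^ (p' i) :=
        Real.mul_rpow hR0.le hm0
      have step3 : R ≤ R ^ (p' i) := by
        have := Real.rpow_le_rpow_of_exponent_le hR.le hpi1.le
        rwa [Real.rpow_one] at this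
      have step4 : m ^ q ≤ m ^ (p' i) := by
        rcases eq_or_lt_of_le hm0 with h | h
        · rw [← h, Real.zero_rpow (ne_of_gt hq0),
            Real.zero_rpow (ne_of_gt (lt_trans one_pos hpi1))]
        · exact Real.rpow_le_rpow_of_exponent_ge h hm1 hpi.2.le
      have : R * m ^ q ≤ R ^ (p' i) * m ^ (p' i) :=
        mul_le_mul step3 step4 (Real.rpow_nonneg hm0 q) (Real.rpow_nonneg hR0.le _)
      calc R * m ^ q ≤ R ^ (p' i) * m ^ (p' i) := this
        _ = (R * m) ^ (p' i) := step2.symm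
        _ ≤ suppFn (K i) (v : EuclideanSpace ℝ (Fin n)) ^ (p' i) := step1
    -- integrability of suppFn ^ p' i
    have hgint : Integrable (fun v : ↥(sphere (0 : EuclideanSpace ℝ (Fin n)) 1) =>
        suppFn (K i) (v : EuclideanSpace ℝ (Fin n)) ^ (p' i)) μ := by
      by_contra h
      have hni := hnorm i
      rw [integral_undef h, mul_zero] at hni
      norm_num at hni
    have hn2 : ((n : ℝ) + 2) ≠ 0 := by positivity
    have hInt : ∫ v, suppFn (K i) (v : EuclideanSpace ℝ (Fin n)) ^ (p' i) ∂μ = (n : ℝ) + 2 := by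
      have hni := hnorm i
      field_simp at hni
      linarith
    have hmono : ∫ v, R * (max ⟪(uu : EuclideanSpace ℝ (Fin n)), (v : EuclideanSpace ℝ (Fin n))⟫ 0) ^ q ∂μ ≤
        ∫ v, suppFn (K i) (v : EuclideanSpace ℝ (Fin n)) ^ (p' i) ∂μ := by
      refine integral_mono_of_nonneg ?_ hgint (Eventually.of_forall hptwise)
      exact Eventually.of_forall fun v =>
        mul_nonneg hR0.le (Real.rpow_nonneg (le_max_right _ _) q)
    rw [integral_const_mul, hInt] at hmono
    have hRc : R * c ≤ (n : ℝ) + 2 := by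
      have : R * c ≤ R * F uu := by
        exact mul_le_mul_of_nonneg_left (hcmin uu) hR0.le
      exact this.trans hmono
    rw [le_div_iff₀ hc]
    exact hRc
  -- individual bounds for all i
  have indiv : ∀ i, ∃ B : ℝ, ∀ u : ↥(sphere (0 : EuclideanSpace ℝ (Fin n)) 1), suppFn (K i) (u : EuclideanSpace ℝ (Fin n)) ≤ B := by
    intro i
    obtain ⟨x, hxK, hx⟩ := (hKcpt i).exists_isMaxOn ⟨0, hK0 i⟩ continuous_norm.continuousOn
    exact ⟨‖x‖, hub i x (fun y hy => hx hy)⟩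
  choose B hB using indiv
  refine ⟨max 1 (((n : ℝ) + 2) / c) + ∑ j ∈ Finset.range N, max (B j) 0, fun i u => ?_⟩
  have hsum0 : (0 : ℝ) ≤ ∑ j ∈ Finset.range N, max (B j) 0 :=
    Finset.sum_nonneg fun j _ => le_max_right _ _
  have hmax0 : (0 : ℝ) ≤ max 1 (((n : ℝ) + 2) / c) :=
    le_trans zero_le_one (le_max_left _ _)
  by_cases hi : N ≤ i
  · have := key i (hN i hi) u
    linarith
  · push_neg at hi
    have h1 : suppFn (K i) (u : EuclideanSpace ℝ (Fin n)) ≤ max (B i) 0 := (hB i u).trans (le_max_left _ _)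
    have h2 : max (B i) 0 ≤ ∑ j ∈ Finset.range N, max (B j) 0 :=
      Finset.single_le_sum (f := fun j => max (B j) 0) (fun j _ => le_max_right _ _) (Finset.mem_range.2 hi)
    linarith
end
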